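/- Let C ≤ SL_3(R) be the group of positive diagonal matrices and let P_n be the matrix with rows (1, n, n), (0, 1, 0), (0, 0, 1). Then P_n C P_n^{-1} converges, as n → ∞, to the group N_2 = { matrices with rows (1, s, t), (0, 1, 0), (0, 0, 1) : s, t ∈ R }. -/

import Mathlib

open Filter Topology Matrix

/-- Convergence of a sequence of subsets (subgroups) of a topological space:
(a) every element of `L` is a limit of a sequence with `n`-th term in `H n`;
(b) every subsequential limit of such sequences lies in `L`. -/
def SubgroupConverges {M : Type*} [TopologicalSpace M]
    (H : ℕ → Set M) (L : Set M) : Prop :=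
  (∀ l ∈ L, ∃ h : ℕ → M, (∀ n, h n ∈ H n) ∧ Tendsto h atTop (𝓝 l)) ∧
  (∀ h : ℕ → M, (∀ n, h n ∈ H n) → ∀ φ : ℕ → ℕ, StrictMono φ → ∀ l : M,
    Tendsto (h ∘ φ) atTop (𝓝 l) → l ∈ L)

/-- The positive diagonal Cartan subgroup of SL₃(ℝ), as a set of matrices. -/
def CartanC : Set (Matrix (Fin 3) (Fin 3) ℝ) :=
  {M | ∃ a b : ℝ, 0 < a ∧ 0 < b ∧ M = Matrix.diagonal ![a, b, 1 / (a * b)]}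

noncomputable def P3 (n : ℕ) : Matrix (Fin 3) (Fin 3) ℝ :=
  !![1, (n : ℝ), (n : ℝ); 0, 1, 0; 0, 0, 1]

def groupN2 : Set (Matrix (Fin 3) (Fin 3) ℝ) :=
  {M | ∃ s t : ℝ, M = !![1, s, t; 0, 1, 0; 0, 0, 1]}

/-!
Conjugating `diag(a, b, c)` by `P_n` gives the matrix with diagonal `(a, b, c)`, first row
`(a, n(b - a), n(c - a))` and zeros elsewhere. Along a convergent subsequence `n(b - a)` and
`n(c - a)` stay bounded while `n → ∞`, so `a`, `b`, `c` have a common limit, which is `1` because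
`abc = 1`. Conversely, `diag(e^{u/n}, e^{(u+s)/n}, e^{(u+t)/n})` with `3u + s + t = 0` lies in `C`,
and its conjugates converge to the element of `N₂` with first row `(1, s, t)` because
`n(e^{x/n} - 1) → x`.
-/

theorem HasDerivAt.tendsto_natCast_smul_sub {E : Type*} [NormedAddCommGroup E] [NormedSpace ℝ E]
    {f : ℝ → E} {f' : E} {x : ℝ} (hf : HasDerivAt f f' x) :
    Tendsto (fun n : ℕ => (n : ℝ) • (f (x + (n : ℝ)⁻¹) - f x)) atTop (𝓝 f') := by
  have h := hf.tendsto_slope_zero_right.comp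
    (tendsto_inv_atTop_nhdsGT_zero.comp tendsto_natCast_atTop_atTop)
  simpa only [Function.comp_def, inv_inv] using h

theorem Real.tendsto_natCast_mul_exp_div_sub_one (u : ℝ) :
    Tendsto (fun n : ℕ => (n : ℝ) * (Real.exp (u / n) - 1)) atTop (𝓝 u) := by
  have h : HasDerivAt (fun t => Real.exp (u * t)) u 0 := by
    simpa using ((hasDerivAt_id (0 : ℝ)).const_mul u).exp
  simpa [div_eq_mul_inv] using h.tendsto_natCast_smul_sub

theorem Filter.Tendsto.tendsto_zero_of_tendsto_mul {α : Type*} {l : Filter α} {f g : α → ℝ}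
    {c : ℝ} (hf : Tendsto f l atTop) (hfg : Tendsto (fun x => f x * g x) l (𝓝 c)) :
    Tendsto g l (𝓝 0) := by
  refine (hfg.div_atTop hf).congr' ?_
  filter_upwards [hf.eventually_ne_atTop 0] with x hx
  field_simp

def diagFirstRow (a b c s t : ℝ) : Matrix (Fin 3) (Fin 3) ℝ :=
  !![a, s, t; 0, b, 0; 0, 0, c]

theorem P3_inv (n : ℕ) : (P3 n)⁻¹ = !![1, -(n : ℝ), -(n : ℝ); 0, 1, 0; 0, 0, 1] := by
  refine inv_eq_right_inv ?_
  ext i j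
  fin_cases i <;> fin_cases j <;> simp [P3, Matrix.mul_apply, Fin.sum_univ_three]

theorem P3_mul_diagonal_mul_inv (n : ℕ) (a b c : ℝ) :
    P3 n * diagonal ![a, b, c] * (P3 n)⁻¹ = diagFirstRow a b c (n * (b - a)) (n * (c - a)) := by
  rw [P3_inv]
  ext i j
  fin_cases i <;> fin_cases j <;>
    simp [P3, diagFirstRow, Matrix.mul_apply, Fin.sum_univ_three, Matrix.diagonal, vecHead,
      vecTail] <;> ring

theorem mem_conj_cartanC_iff {n : ℕ} {M : Matrix (Fin 3) (Fin 3) ℝ} :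
    M ∈ (fun M => P3 n * M * (P3 n)⁻¹) '' CartanC ↔
      ∃ a b c : ℝ, 0 < a ∧ 0 < b ∧ a * b * c = 1 ∧
        M = diagFirstRow a b c (n * (b - a)) (n * (c - a)) := by
  constructor
  · rintro ⟨_, ⟨a, b, ha, hb, rfl⟩, rfl⟩
    exact ⟨a, b, 1 / (a * b), ha, hb, by field_simp, P3_mul_diagonal_mul_inv n a b _⟩
  · rintro ⟨a, b, c, ha, hb, habc, rfl⟩
    have hc : c = 1 / (a * b) := by field_simp; linarith
    subst hc
    exact ⟨_, ⟨a, b, ha, hb, rfl⟩, P3_mul_diagonal_mul_inv n a b _⟩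

theorem tendsto_diagFirstRow_iff {α : Type*} {l : Filter α} {a b c s t : α → ℝ}
    {a₀ b₀ c₀ s₀ t₀ : ℝ} :
    Tendsto (fun k => diagFirstRow (a k) (b k) (c k) (s k) (t k)) l
        (𝓝 (diagFirstRow a₀ b₀ c₀ s₀ t₀)) ↔
      Tendsto a l (𝓝 a₀) ∧ Tendsto b l (𝓝 b₀) ∧ Tendsto c l (𝓝 c₀) ∧
        Tendsto s l (𝓝 s₀) ∧ Tendsto t l (𝓝 t₀) := by
  refine tendsto_pi_nhds.trans ?_
  simp only [diagFirstRow, tendsto_pi_nhds, of_apply, cons_val', cons_val_fin_one,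
    Fin.forall_fin_succ, Fin.isValue, cons_val_zero, cons_val_succ, forall_const,
    tendsto_const_nhds, true_and, and_true]
  tauto

theorem eq_diagFirstRow_of_tendsto {α : Type*} {l : Filter α} [l.NeBot] {a b c s t : α → ℝ}
    {M : Matrix (Fin 3) (Fin 3) ℝ}
    (h : Tendsto (fun k => diagFirstRow (a k) (b k) (c k) (s k) (t k)) l (𝓝 M)) :
    M = diagFirstRow (M 0 0) (M 1 1) (M 2 2) (M 0 1) (M 0 2) := by
  have hentry (i j : Fin 3) : Tendsto (fun k => diagFirstRow (a k) (b k) (c k) (s k) (t k) i j)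
      l (𝓝 (M i j)) := ((continuous_apply_apply i j).tendsto M).comp h
  ext i j
  fin_cases i <;> fin_cases j
  all_goals first
    | rfl
    | exact tendsto_nhds_unique (hentry _ _) (tendsto_const_nhds (x := 0))

theorem exists_tendsto_conj_cartanC (s t : ℝ) :
    ∃ h : ℕ → Matrix (Fin 3) (Fin 3) ℝ,
      (∀ n, h n ∈ (fun M => P3 n * M * (P3 n)⁻¹) '' CartanC) ∧
        Tendsto h atTop (𝓝 (diagFirstRow 1 1 1 s t)) := by
  obtain ⟨u, hu⟩ : ∃ u : ℝ, 3 * u + s + t = 0 := ⟨-(s + t) / 3, by ring⟩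
  let e (x : ℝ) (n : ℕ) : ℝ := Real.exp (x / n)
  refine ⟨fun n => diagFirstRow (e u n) (e (u + s) n) (e (u + t) n)
    (n * (e (u + s) n - e u n)) (n * (e (u + t) n - e u n)), fun n => ?_, ?_⟩
  · refine mem_conj_cartanC_iff.2 ⟨_, _, _, Real.exp_pos _, Real.exp_pos _, ?_, rfl⟩
    rw [← Real.exp_add, ← Real.exp_add, ← add_div, ← add_div, Real.exp_eq_one_iff,
      show u + (u + s) + (u + t) = 0 by linarith, zero_div]
  · have he_one (x : ℝ) : Tendsto (e x) atTop (𝓝 1) := by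
      simpa [e, Function.comp_def] using
        (Real.continuous_exp.tendsto 0).comp (tendsto_const_div_atTop_nhds_zero_nat x)
    have he_sub (x : ℝ) : Tendsto (fun n : ℕ => n * (e (u + x) n - e u n)) atTop (𝓝 x) := by
      simpa [mul_sub] using (Real.tendsto_natCast_mul_exp_div_sub_one (u + x)).sub
        (Real.tendsto_natCast_mul_exp_div_sub_one u)
    exact tendsto_diagFirstRow_iff.2 ⟨he_one _, he_one _, he_one _, he_sub s, he_sub t⟩

theorem mem_groupN2_of_tendsto_conj_cartanC {h : ℕ → Matrix (Fin 3) (Fin 3) ℝ}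
    (hh : ∀ n, h n ∈ (fun M => P3 n * M * (P3 n)⁻¹) '' CartanC) {φ : ℕ → ℕ} (hφ : StrictMono φ)
    {l : Matrix (Fin 3) (Fin 3) ℝ} (hl : Tendsto (h ∘ φ) atTop (𝓝 l)) : l ∈ groupN2 := by
  choose a b c ha hb habc hform using fun n => mem_conj_cartanC_iff.1 (hh n)
  have hlim : Tendsto (fun k => diagFirstRow (a (φ k)) (b (φ k)) (c (φ k))
      (φ k * (b (φ k) - a (φ k))) (φ k * (c (φ k) - a (φ k)))) atTop (𝓝 l) := by
    simpa only [Function.comp_def, hform] using hl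
  have hl_eq := eq_diagFirstRow_of_tendsto hlim
  rw [hl_eq, tendsto_diagFirstRow_iff] at hlim
  obtain ⟨ha_lim, hb_lim, hc_lim, hs_lim, ht_lim⟩ := hlim
  have hφ_top : Tendsto (fun k => (φ k : ℝ)) atTop atTop :=
    tendsto_natCast_atTop_atTop.comp hφ.tendsto_atTop
  have hba : l 1 1 = l 0 0 := sub_eq_zero.1 <|
    tendsto_nhds_unique (hb_lim.sub ha_lim) (hφ_top.tendsto_zero_of_tendsto_mul hs_lim)
  have hca : l 2 2 = l 0 0 := sub_eq_zero.1 <|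
    tendsto_nhds_unique (hc_lim.sub ha_lim) (hφ_top.tendsto_zero_of_tendsto_mul ht_lim)
  have hcube : l 0 0 ^ 3 = 1 := by
    have hprod := (ha_lim.mul hb_lim).mul hc_lim
    simp only [habc, hba, hca] at hprod
    calc l 0 0 ^ 3 = l 0 0 * l 0 0 * l 0 0 := by ring
      _ = 1 := tendsto_nhds_unique hprod tendsto_const_nhds
  have hone : l 0 0 = 1 := (pow_eq_one_iff_of_nonneg
    (ge_of_tendsto' ha_lim fun k => (ha (φ k)).le) three_ne_zero).1 hcube
  rw [hl_eq, hba, hca, hone]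
  exact ⟨_, _, rfl⟩

/-- `P_n C P_n⁻¹` converges to the group `N₂`. -/
theorem cartan_conj_converges_to_N2 :
    SubgroupConverges
      (fun n => (fun M => P3 n * M * (P3 n)⁻¹) '' CartanC) groupN2 := by
  refine ⟨?_, fun h hh φ hφ l hl => mem_groupN2_of_tendsto_conj_cartanC hh hφ hl⟩
  rintro _ ⟨s, t, rfl⟩
  exact exists_tendsto_conj_cartanC s t
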